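/- Let d ≥ 1 be an integer, let n, κ, s be real constants, let η, λ, p > 0, and let 0 < ρ⁎ ≤ ρ°. Let ψ : [ρ⁎, ρ°] → ℝ^d be continuously differentiable, and write f(ρ) := ρ/η. Then λ·(2κ+2−s) · ∫_{ρ⁎}^{ρ°} e^{−λ f(ρ)^p/p} f(ρ)^{n−2−2κ} ρ^{s−n−1} |ψ(ρ)|² dρ ≤ λ · e^{−λ f(ρ⁎)^p/p} f(ρ⁎)^{n−2−2κ} ρ⁎^{s−n} |ψ(ρ⁎)|² + ∫_{ρ⁎}^{ρ°} e^{−λ f(ρ)^p/p} f(ρ)^{n−2−p−2κ} ρ^{s−n+1} |ψ′(ρ)|² dρ. -/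

import Mathlib

/-!
Write `w = e^{−λ f^p/p} f^a ρ^b` with `f = ρ/η`, so that `w'/w = (a + b − λ f^p)/ρ`.
In `−(λ w |ψ|²)'` the cross term `−2λ w ⟨ψ, ψ'⟩` is absorbed by Young's inequality with
parameter `λ f^p/ρ`; the resulting `−λ² f^p w |ψ|²/ρ` exactly cancels the contribution of the
exponential factor, leaving the pointwise bound
`−λ (a + b) w |ψ|²/ρ ≤ −(λ w |ψ|²)' + ρ f^{−p} w |ψ'|²`.
Integrating over `[ρ⁎, ρ°]` and discarding the nonnegative boundary term at `ρ°` gives the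
estimate, with `a = n − 2 − 2κ` and `b = s − n`.
-/

open Set Real intervalIntegral MeasureTheory

noncomputable def carlemanWeight (lam η p a b ρ : ℝ) : ℝ :=
  exp (-(lam * (ρ / η) ^ p / p)) * (ρ / η) ^ a * ρ ^ b

section CarlemanWeight

variable {lam η p a b ρ : ℝ}

theorem carlemanWeight_pos (hη : 0 < η) (hρ : 0 < ρ) : 0 < carlemanWeight lam η p a b ρ := by
  unfold carlemanWeight; positivity

theorem carlemanWeight_sub_one_right (hρ : 0 < ρ) :
    carlemanWeight lam η p a (b - 1) ρ = carlemanWeight lam η p a b ρ / ρ := by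
  rw [carlemanWeight, carlemanWeight, rpow_sub_one hρ.ne', mul_div_assoc']

theorem carlemanWeight_sub_add_one (hη : 0 < η) (hρ : 0 < ρ) :
    carlemanWeight lam η p (a - p) (b + 1) ρ =
      carlemanWeight lam η p a b ρ * ρ / (ρ / η) ^ p := by
  rw [carlemanWeight, carlemanWeight, rpow_sub (div_pos hρ hη), rpow_add_one hρ.ne']
  ring

theorem continuousAt_carlemanWeight (hη : 0 < η) (hρ : 0 < ρ) :
    ContinuousAt (carlemanWeight lam η p a b) ρ := by
  have hf : ρ / η ≠ 0 := (div_pos hρ hη).ne'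
  unfold carlemanWeight
  fun_prop (disch := simp [hf, hρ.ne'])

theorem hasDerivAt_carlemanWeight (hp : p ≠ 0) (hη : 0 < η) (hρ : 0 < ρ) :
    HasDerivAt (carlemanWeight lam η p a b)
      (carlemanWeight lam η p a b ρ * ((a + b - lam * (ρ / η) ^ p) / ρ)) ρ := by
  have hf : 0 < ρ / η := div_pos hρ hη
  have hdiv : HasDerivAt (· / η) (1 / η) ρ := (hasDerivAt_id ρ).div_const η
  have hexp := ((((hasDerivAt_rpow_const (p := p) (Or.inl hf.ne')).comp ρ hdiv).const_mul
    lam).div_const p).neg.exp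
  have hfa := (hasDerivAt_rpow_const (p := a) (Or.inl hf.ne')).comp ρ hdiv
  have hρb := hasDerivAt_rpow_const (p := b) (Or.inl hρ.ne')
  refine ((hexp.mul hfa).mul hρb).congr_deriv ?_
  simp only [carlemanWeight, Function.comp_apply, Pi.mul_apply, Pi.neg_apply, rpow_sub_one hf.ne',
    rpow_sub_one hρ.ne']
  field_simp
  ring

end CarlemanWeight

theorem two_mul_mul_inner_le {E : Type*} [NormedAddCommGroup E] [InnerProductSpace ℝ E]
    (t : ℝ) {c : ℝ} (hc : 0 < c) (x y : E) :
    2 * t * inner ℝ x y ≤ t ^ 2 * c * ‖x‖ ^ 2 + ‖y‖ ^ 2 / c := by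
  have h := norm_sub_sq_real ((t * c) • x) y
  rw [norm_smul, real_inner_smul_left, mul_pow, Real.norm_eq_abs, sq_abs] at h
  have key : t ^ 2 * c * ‖x‖ ^ 2 + ‖y‖ ^ 2 / c - 2 * t * inner ℝ x y =
      ‖(t * c) • x - y‖ ^ 2 / c := by
    rw [h]; field_simp; ring
  linarith [div_nonneg (sq_nonneg ‖(t * c) • x - y‖) hc.le]

theorem integral_le_of_hasDerivWithinAt_le_neg {u u' φ : ℝ → ℝ} {a b : ℝ} (hab : a ≤ b)
    (hu : ∀ x ∈ Icc a b, HasDerivWithinAt u (u' x) (Icc a b) x)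
    (hφ : IntervalIntegrable φ volume a b) (hφu : ∀ x ∈ Ioo a b, φ x ≤ -u' x) (hub : 0 ≤ u b) :
    ∫ x in a..b, φ x ≤ u a := by
  have hFTC := integral_le_sub_of_hasDeriv_right_of_le (g := -u) hab
    (fun x hx => (hu x hx).continuousWithinAt.neg)
    (fun x hx => ((hu x (Ioo_subset_Icc_self hx)).neg).mono_of_mem_nhdsWithin
      (Icc_mem_nhdsGT_of_mem ⟨hx.1.le, hx.2⟩))
    ((intervalIntegrable_iff_integrableOn_Icc_of_le hab).1 hφ) hφu
  simp only [Pi.neg_apply] at hFTC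
  linarith

section Estimate

variable {E : Type*} [NormedAddCommGroup E] [InnerProductSpace ℝ E] {lam η p a b ρ : ℝ}

theorem carleman_pointwise_le (hη : 0 < η) (hρ : 0 < ρ) (x y : E) :
    lam * (-(a + b)) * (carlemanWeight lam η p a (b - 1) ρ * ‖x‖ ^ 2)
        - carlemanWeight lam η p (a - p) (b + 1) ρ * ‖y‖ ^ 2
      ≤ -(lam * (carlemanWeight lam η p a b ρ * ((a + b - lam * (ρ / η) ^ p) / ρ) * ‖x‖ ^ 2
        + carlemanWeight lam η p a b ρ * (2 * inner ℝ x y))) := by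
  have hF : 0 < (ρ / η) ^ p := by positivity
  have hW := carlemanWeight_pos (lam := lam) (p := p) (a := a) (b := b) hη hρ
  have young := two_mul_mul_inner_le lam (div_pos hF hρ) x y
  rw [carlemanWeight_sub_one_right hρ, carlemanWeight_sub_add_one hη hρ]
  set W := carlemanWeight lam η p a b ρ
  have key : -(lam * (W * ((a + b - lam * (ρ / η) ^ p) / ρ) * ‖x‖ ^ 2 + W * (2 * inner ℝ x y)))
      - (lam * (-(a + b)) * (W / ρ * ‖x‖ ^ 2) - W * ρ / (ρ / η) ^ p * ‖y‖ ^ 2)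
      = W * (lam ^ 2 * ((ρ / η) ^ p / ρ) * ‖x‖ ^ 2 + ‖y‖ ^ 2 / ((ρ / η) ^ p / ρ)
        - 2 * lam * inner ℝ x y) := by
    field_simp
    ring
  rw [← sub_nonneg, key]
  exact mul_nonneg hW.le (sub_nonneg.2 young)

theorem carleman_fiber_estimate (hp : p ≠ 0) (hη : 0 < η) (hlam : 0 ≤ lam) {ρs ρe : ℝ}
    (hρs : 0 < ρs) (hle : ρs ≤ ρe) {ψ ψ' : ℝ → E}
    (hderiv : ∀ ρ ∈ Icc ρs ρe, HasDerivWithinAt ψ (ψ' ρ) (Icc ρs ρe) ρ)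
    (hcont : ContinuousOn ψ' (Icc ρs ρe)) :
    lam * (-(a + b)) * ∫ ρ in ρs..ρe, carlemanWeight lam η p a (b - 1) ρ * ‖ψ ρ‖ ^ 2
      ≤ lam * (carlemanWeight lam η p a b ρs * ‖ψ ρs‖ ^ 2)
        + ∫ ρ in ρs..ρe, carlemanWeight lam η p (a - p) (b + 1) ρ * ‖ψ' ρ‖ ^ 2 := by
  have hpos : ∀ ρ ∈ Icc ρs ρe, 0 < ρ := fun ρ hρ => hρs.trans_le hρ.1
  have hweight : ∀ a b, ContinuousOn (carlemanWeight lam η p a b) (Icc ρs ρe) :=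
    fun a b ρ hρ => (continuousAt_carlemanWeight hη (hpos ρ hρ)).continuousWithinAt
  have hψ : ContinuousOn ψ (Icc ρs ρe) := fun ρ hρ => (hderiv ρ hρ).continuousWithinAt
  have hL : IntervalIntegrable (fun ρ => carlemanWeight lam η p a (b - 1) ρ * ‖ψ ρ‖ ^ 2)
      volume ρs ρe := ((hweight _ _).mul (hψ.norm.pow 2)).intervalIntegrable_of_Icc hle
  have hR : IntervalIntegrable (fun ρ => carlemanWeight lam η p (a - p) (b + 1) ρ * ‖ψ' ρ‖ ^ 2)
      volume ρs ρe := ((hweight _ _).mul (hcont.norm.pow 2)).intervalIntegrable_of_Icc hle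
  rw [← intervalIntegral.integral_const_mul, ← sub_le_iff_le_add,
    ← integral_sub (hL.const_mul _) hR]
  refine integral_le_of_hasDerivWithinAt_le_neg
    (u := fun ρ => lam * (carlemanWeight lam η p a b ρ * ‖ψ ρ‖ ^ 2)) hle (fun ρ hρ => ?_)
    ((hL.const_mul _).sub hR)
    (fun ρ hρ => carleman_pointwise_le hη (hpos ρ (Ioo_subset_Icc_self hρ)) _ _) ?_
  · exact ((hasDerivAt_carlemanWeight hp hη (hpos ρ hρ)).hasDerivWithinAt.mul
      (hderiv ρ hρ).norm_sq).const_mul lam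
  · exact mul_nonneg hlam
      (mul_nonneg (carlemanWeight_pos hη (hρs.trans_le hle)).le (sq_nonneg _))

end Estimate

theorem transport_carleman_fiber_general
    {d : ℕ} (n κ s η lam p ρs ρe : ℝ)
    (hη : 0 < η) (hlam : 0 < lam) (hp : 0 < p) (hρs : 0 < ρs) (hle : ρs ≤ ρe)
    (ψ ψ' : ℝ → EuclideanSpace ℝ (Fin d))
    (hderiv : ∀ ρ ∈ Icc ρs ρe, HasDerivWithinAt ψ (ψ' ρ) (Icc ρs ρe) ρ)
    (hcont : ContinuousOn ψ' (Icc ρs ρe)) :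
    lam * (2 * κ + 2 - s) *
      (∫ ρ in ρs..ρe, Real.exp (-(lam * (ρ / η) ^ p / p)) * (ρ / η) ^ (n - 2 - 2 * κ) *
        ρ ^ (s - n - 1) * ‖ψ ρ‖ ^ 2)
    ≤ lam * Real.exp (-(lam * (ρs / η) ^ p / p)) * (ρs / η) ^ (n - 2 - 2 * κ) *
        ρs ^ (s - n) * ‖ψ ρs‖ ^ 2
      + ∫ ρ in ρs..ρe, Real.exp (-(lam * (ρ / η) ^ p / p)) *
          (ρ / η) ^ (n - 2 - p - 2 * κ) * ρ ^ (s - n + 1) * ‖ψ' ρ‖ ^ 2 := by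
  have key := carleman_fiber_estimate (a := n - 2 - 2 * κ) (b := s - n) hp.ne' hη hlam.le hρs hle
    hderiv hcont
  rw [show -(n - 2 - 2 * κ + (s - n)) = 2 * κ + 2 - s by ring,
    show n - 2 - 2 * κ - p = n - 2 - p - 2 * κ by ring] at key
  simpa only [carlemanWeight, mul_assoc] using key

/-- **Fiberwise transport Carleman estimate** (core of the proof of Proposition 4.2):
for a `C¹` curve `ψ` on `[ρ⁎, ρ°]`, with `f(ρ) = ρ/η` and the Carleman weight
`e^{−λ f^p/p} f^{n−2−2κ} ρ^{s−n}`, the weighted `L²` norm of `ψ` is controlled by the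
weighted `L²` norm of `ψ′` plus a boundary term at `ρ = ρ⁎`. -/
theorem transport_carleman_fiber
    {d : ℕ} (hd : 1 ≤ d) (n κ s η lam p ρs ρe : ℝ)
    (hη : 0 < η) (hlam : 0 < lam) (hp : 0 < p) (hρs : 0 < ρs) (hle : ρs ≤ ρe)
    (ψ ψ' : ℝ → EuclideanSpace ℝ (Fin d))
    (hderiv : ∀ ρ ∈ Icc ρs ρe, HasDerivWithinAt ψ (ψ' ρ) (Icc ρs ρe) ρ)
    (hcont : ContinuousOn ψ' (Icc ρs ρe)) :
    lam * (2 * κ + 2 - s) *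
      (∫ ρ in ρs..ρe, Real.exp (-(lam * (ρ / η) ^ p / p)) * (ρ / η) ^ (n - 2 - 2 * κ) *
        ρ ^ (s - n - 1) * ‖ψ ρ‖ ^ 2)
    ≤ lam * Real.exp (-(lam * (ρs / η) ^ p / p)) * (ρs / η) ^ (n - 2 - 2 * κ) *
        ρs ^ (s - n) * ‖ψ ρs‖ ^ 2
      + ∫ ρ in ρs..ρe, Real.exp (-(lam * (ρ / η) ^ p / p)) *
          (ρ / η) ^ (n - 2 - p - 2 * κ) * ρ ^ (s - n + 1) * ‖ψ' ρ‖ ^ 2 :=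
  transport_carleman_fiber_general n κ s η lam p ρs ρe hη hlam hp hρs hle ψ ψ' hderiv hcont
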